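/- Let ν(ξ) = ∫_{ℝ³} ∫_{S²} |(ξ-ξ*)·ω| M(ξ*) dω dξ* where M(ξ) = (2π)^{-3/2} e^{-|ξ|²/2}. Then there exist constants 0 < c₁ ≤ c₂ such that c₁(1+|ξ|²)^{1/2} ≤ ν(ξ) ≤ c₂(1+|ξ|²)^{1/2} for all ξ ∈ ℝ³. -/

import Mathlib

open MeasureTheory Real
open scoped RealInnerProductSpace

noncomputable def Mxw (ξ : EuclideanSpace ℝ (Fin 3)) : ℝ :=
  (2 * π) ^ (-(3 : ℝ) / 2) * Real.exp (-‖ξ‖ ^ 2 / 2)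

/-- The collision frequency for the hard-sphere model. -/
noncomputable def nu (ξ : EuclideanSpace ℝ (Fin 3)) : ℝ :=
  ∫ ξs : EuclideanSpace ℝ (Fin 3),
    (∫ ω : Metric.sphere (0 : EuclideanSpace ℝ (Fin 3)) 1,
        |⟪ξ - ξs, (ω : EuclideanSpace ℝ (Fin 3))⟫| * Mxw ξs
      ∂((volume : Measure (EuclideanSpace ℝ (Fin 3))).toSphere))

/-!
Averaging `|⟪v, ω⟫|` over the unit sphere gives `K * ‖v‖` with `K > 0`: the average is
positively homogeneous in `v` and invariant under linear isometries, and the invariance is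
read off from the rotation invariance of Lebesgue measure through polar coordinates, by
comparing with `∫ |⟪v, x⟫| exp (-‖x‖²) dx`. Hence `ν ξ = K ∫ ‖ξ - x‖ M x dx`. Since `M` is
even, `∫ M x • x = 0`, so with `A = ∫ M` and `B = ∫ ‖x‖ M x` the triangle inequality and Jensen
give `max (A ‖ξ‖) (B - A ‖ξ‖) ≤ ∫ ‖ξ - x‖ M x ≤ A ‖ξ‖ + B`, which is comparable to
`√(1 + ‖ξ‖²)`.
-/

open Set Metric

section NormedSpace

variable {E : Type*} [NormedAddCommGroup E] [NormedSpace ℝ E] [Nontrivial E]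
  [FiniteDimensional ℝ E] [MeasurableSpace E] [BorelSpace E] (μ : Measure E) [μ.IsAddHaarMeasure]

lemma integrable_norm_pow_mul_exp_neg_mul_sq_norm {b : ℝ} (hb : 0 < b) (k : ℕ) :
    Integrable (fun x : E => ‖x‖ ^ k * rexp (-b * ‖x‖ ^ 2)) μ := by
  rw [integrable_fun_norm_addHaar μ (f := fun y => y ^ k * rexp (-b * y ^ 2))]
  refine (integrableOn_rpow_mul_exp_neg_mul_sq hb (s := ((Module.finrank ℝ E - 1 + k : ℕ) : ℝ))
    (neg_one_lt_zero.trans_le (Nat.cast_nonneg _))).congr_fun (fun y _ => ?_) measurableSet_Ioi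
  simp only [rpow_natCast, pow_add, smul_eq_mul]
  ring

end NormedSpace

section InnerProductSpace

variable {E : Type*} [NormedAddCommGroup E] [InnerProductSpace ℝ E]
  [FiniteDimensional ℝ E] [MeasurableSpace E] [BorelSpace E]

lemma integral_abs_inner_map_mul_radial (e : E ≃ₗᵢ[ℝ] E) (v : E) (g : ℝ → ℝ) :
    ∫ x, |⟪e v, x⟫| * g ‖x‖ = ∫ x, |⟪v, x⟫| * g ‖x‖ := by
  rw [← e.measurePreserving.integral_comp e.toHomeomorph.measurableEmbedding]
  simp only [LinearIsometryEquiv.inner_map_map, LinearIsometryEquiv.norm_map]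

variable [Nontrivial E]

lemma integral_abs_inner_mul_radial (v : E) (g : ℝ → ℝ) :
    ∫ x, |⟪v, x⟫| * g ‖x‖ =
      (∫ ω : sphere (0 : E) 1, |⟪v, (ω : E)⟫| ∂(volume : Measure E).toSphere) *
        ∫ r : Ioi (0 : ℝ), (r : ℝ) * g r ∂Measure.volumeIoiPow (Module.finrank ℝ E - 1) := by
  calc ∫ x, |⟪v, x⟫| * g ‖x‖
      = ∫ x : ({0}ᶜ : Set E), |⟪v, (x : E)⟫| * g ‖(x : E)‖ ∂(volume.comap Subtype.val) := by
        rw [integral_subtype_comap (measurableSet_singleton 0).compl (fun x => |⟪v, x⟫| * g ‖x‖),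
          restrict_compl_singleton]
    _ = ∫ x : ({0}ᶜ : Set E), |⟪v, ((homeomorphUnitSphereProd E x).1 : E)⟫| *
          (((homeomorphUnitSphereProd E x).2 : ℝ) * g (homeomorphUnitSphereProd E x).2)
          ∂(volume.comap Subtype.val) := by
        congr 1 with ⟨x, hx⟩
        have hx0 : ‖x‖ ≠ 0 := norm_ne_zero_iff.mpr hx
        simp only [homeomorphUnitSphereProd_apply_fst_coe, homeomorphUnitSphereProd_apply_snd_coe,
          inner_smul_right, abs_mul, abs_inv, abs_norm]
        field_simp
    _ = _ := by
      rw [(volume : Measure E).measurePreserving_homeomorphUnitSphereProd.integral_comp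
        (Homeomorph.measurableEmbedding _) (fun z => |⟪v, (z.1 : E)⟫| * ((z.2 : ℝ) * g z.2))]
      exact integral_prod_mul (fun ω : sphere (0 : E) 1 => |⟪v, (ω : E)⟫|)
        (fun r : Ioi (0 : ℝ) => (r : ℝ) * g r)

lemma integral_abs_inner_mul_gaussian_pos {v : E} (hv : v ≠ 0) :
    0 < ∫ x, |⟪v, x⟫| * rexp (-‖x‖ ^ 2) := by
  refine integral_pos_of_integrable_nonneg_nonzero (x := v) (by fun_prop) ?_
    (fun x => by positivity) (by simpa using hv)
  refine ((integrable_norm_pow_mul_exp_neg_mul_sq_norm volume one_pos 1).const_mul ‖v‖).mono'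
    (by fun_prop) (ae_of_all _ fun x => ?_)
  rw [norm_of_nonneg (by positivity), pow_one, neg_one_mul, ← mul_assoc]
  exact mul_le_mul_of_nonneg_right (abs_real_inner_le_norm v x) (exp_pos _).le

lemma integral_sphere_abs_inner_map (e : E ≃ₗᵢ[ℝ] E) (v : E) :
    ∫ ω : sphere (0 : E) 1, |⟪e v, (ω : E)⟫| ∂(volume : Measure E).toSphere =
      ∫ ω : sphere (0 : E) 1, |⟪v, (ω : E)⟫| ∂(volume : Measure E).toSphere := by
  obtain ⟨u, hu⟩ := exists_ne (0 : E)
  have hradial : ∫ r : Ioi (0 : ℝ), (r : ℝ) * rexp (-(r : ℝ) ^ 2)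
      ∂Measure.volumeIoiPow (Module.finrank ℝ E - 1) ≠ 0 := by
    have hpos := integral_abs_inner_mul_gaussian_pos hu
    rw [integral_abs_inner_mul_radial u (fun r => rexp (-r ^ 2))] at hpos
    exact right_ne_zero_of_mul hpos.ne'
  have hmap := integral_abs_inner_map_mul_radial e v (fun r => rexp (-r ^ 2))
  rw [integral_abs_inner_mul_radial (e v) (fun r => rexp (-r ^ 2)),
    integral_abs_inner_mul_radial v (fun r => rexp (-r ^ 2))] at hmap
  exact mul_right_cancel₀ hradial hmap

theorem exists_integral_sphere_abs_inner_eq_mul_norm :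
    ∃ K > 0, ∀ v : E,
      ∫ ω : sphere (0 : E) 1, |⟪v, (ω : E)⟫| ∂(volume : Measure E).toSphere = K * ‖v‖ := by
  obtain ⟨u, hu⟩ := exists_norm_eq E zero_le_one
  refine ⟨∫ ω : sphere (0 : E) 1, |⟪u, (ω : E)⟫| ∂(volume : Measure E).toSphere, ?_, fun v => ?_⟩
  · have hcont : Continuous fun ω : sphere (0 : E) 1 => |⟪u, (ω : E)⟫| := by fun_prop
    refine integral_pos_of_integrable_nonneg_nonzero (x := ⟨u, by simpa using hu⟩) hcont
      (hcont.integrable_of_hasCompactSupport (HasCompactSupport.of_compactSpace _))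
      (fun ω => abs_nonneg _) ?_
    simp [hu]
  rcases eq_or_ne v 0 with rfl | hv
  · simp
  set w := ‖v‖⁻¹ • v
  have hw : ‖u‖ = ‖w‖ := by
    rw [hu, norm_smul, norm_inv, norm_norm, inv_mul_cancel₀ (norm_ne_zero_iff.mpr hv)]
  have hvw : v = ‖v‖ • w := (smul_inv_smul₀ (norm_ne_zero_iff.mpr hv) v).symm
  calc ∫ ω : sphere (0 : E) 1, |⟪v, (ω : E)⟫| ∂(volume : Measure E).toSphere
      = ∫ ω : sphere (0 : E) 1, ‖v‖ * |⟪w, (ω : E)⟫| ∂(volume : Measure E).toSphere := by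
        conv_lhs => rw [hvw]
        simp only [real_inner_smul_left, abs_mul, abs_norm]
    _ = ‖v‖ * ∫ ω : sphere (0 : E) 1, |⟪u, (ω : E)⟫| ∂(volume : Measure E).toSphere := by
        rw [integral_const_mul, ← Submodule.reflection_sub hw, integral_sphere_abs_inner_map]
    _ = _ := mul_comm _ _

end InnerProductSpace

section Density

variable {E : Type*} [NormedAddCommGroup E] [NormedSpace ℝ E] [MeasurableSpace E]
  {μ : Measure E} {ρ : E → ℝ}

lemma integral_smul_self_eq_zero_of_even [CompleteSpace E] [MeasurableNeg E] [μ.IsNegInvariant]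
    (hρ : ∀ x, ρ (-x) = ρ x) : ∫ x, ρ x • x ∂μ = 0 := by
  have h := integral_neg_eq_self (fun x => ρ x • x) μ
  simp only [hρ, smul_neg, integral_neg] at h
  have : IsAddTorsionFree E := .of_isTorsionFree ℝ E
  exact self_eq_neg.mp h.symm

lemma integrable_norm_mul (hρ : 0 ≤ ρ) (hsmul : Integrable (fun x => ρ x • x) μ) :
    Integrable (fun x => ‖x‖ * ρ x) μ :=
  hsmul.norm.congr <| ae_of_all _ fun x => by
    simp only [norm_smul, norm_of_nonneg (hρ x), mul_comm]

lemma integrable_norm_sub_mul (hρ : 0 ≤ ρ) (hi : Integrable ρ μ)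
    (hsmul : Integrable (fun x => ρ x • x) μ) (ξ : E) :
    Integrable (fun x => ‖ξ - x‖ * ρ x) μ :=
  ((hi.smul_const ξ).sub hsmul).norm.congr <| ae_of_all _ fun x => by
    simp only [Pi.sub_apply, ← smul_sub, norm_smul, norm_of_nonneg (hρ x), mul_comm]

lemma mul_norm_le_integral_norm_sub_mul [CompleteSpace E] (hρ : 0 ≤ ρ) (hi : Integrable ρ μ)
    (hsmul : Integrable (fun x => ρ x • x) μ) (hmean : ∫ x, ρ x • x ∂μ = 0) (ξ : E) :
    (∫ x, ρ x ∂μ) * ‖ξ‖ ≤ ∫ x, ‖ξ - x‖ * ρ x ∂μ := by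
  have hshift : ∫ x, ρ x • (ξ - x) ∂μ = (∫ x, ρ x ∂μ) • ξ := by
    simp only [smul_sub]
    rw [integral_sub (hi.smul_const ξ) hsmul, hmean, integral_smul_const, sub_zero]
  calc (∫ x, ρ x ∂μ) * ‖ξ‖ = ‖∫ x, ρ x • (ξ - x) ∂μ‖ := by
        rw [hshift, norm_smul, norm_of_nonneg (integral_nonneg hρ)]
    _ ≤ ∫ x, ‖ρ x • (ξ - x)‖ ∂μ := norm_integral_le_integral_norm _
    _ = ∫ x, ‖ξ - x‖ * ρ x ∂μ := by
        simp only [norm_smul, norm_of_nonneg (hρ _), mul_comm]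

lemma integral_norm_sub_mul_le (hρ : 0 ≤ ρ) (hi : Integrable ρ μ)
    (hsmul : Integrable (fun x => ρ x • x) μ) (ξ : E) :
    ∫ x, ‖ξ - x‖ * ρ x ∂μ ≤ (∫ x, ρ x ∂μ) * ‖ξ‖ + ∫ x, ‖x‖ * ρ x ∂μ := by
  have hnorm := integrable_norm_mul hρ hsmul
  rw [← integral_mul_const, ← integral_add (hi.mul_const _) hnorm]
  refine integral_mono (integrable_norm_sub_mul hρ hi hsmul ξ) ((hi.mul_const _).add hnorm)
    fun x => ?_
  have := mul_le_mul_of_nonneg_right (norm_sub_le ξ x) (hρ x)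
  linarith

lemma integral_norm_mul_sub_le (hρ : 0 ≤ ρ) (hi : Integrable ρ μ)
    (hsmul : Integrable (fun x => ρ x • x) μ) (ξ : E) :
    ∫ x, ‖x‖ * ρ x ∂μ - (∫ x, ρ x ∂μ) * ‖ξ‖ ≤ ∫ x, ‖ξ - x‖ * ρ x ∂μ := by
  have hnorm := integrable_norm_mul hρ hsmul
  rw [← integral_mul_const, ← integral_sub hnorm (hi.mul_const _)]
  refine integral_mono (hnorm.sub (hi.mul_const _)) (integrable_norm_sub_mul hρ hi hsmul ξ)
    fun x => ?_
  have := mul_le_mul_of_nonneg_right (norm_sub_norm_le x ξ) (hρ x)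
  rw [norm_sub_rev] at this
  linarith

end Density

lemma mul_sqrt_one_add_sq_le {a b t g : ℝ} (ha : 0 ≤ a) (hb : 0 ≤ b) (ht : 0 ≤ t)
    (h₁ : a * t ≤ g) (h₂ : b - a * t ≤ g) : min a b / 4 * √(1 + t ^ 2) ≤ g := by
  have hsqrt : √(1 + t ^ 2) ≤ 1 + t :=
    sqrt_le_iff.mpr ⟨by positivity, by nlinarith⟩
  have hmin : 0 ≤ min a b := le_min ha hb
  nlinarith [min_le_left a b, min_le_right a b, mul_le_mul_of_nonneg_left hsqrt hmin]

lemma le_mul_sqrt_one_add_sq {a b t g : ℝ} (ha : 0 ≤ a) (hb : 0 ≤ b)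
    (h : g ≤ a * t + b) : g ≤ (a + b) * √(1 + t ^ 2) := by
  have ht_le : t ≤ √(1 + t ^ 2) := le_sqrt_of_sq_le (by linarith)
  have hone_le : 1 ≤ √(1 + t ^ 2) := le_sqrt_of_sq_le (by nlinarith)
  nlinarith

section Maxwellian

local notation "𝔼" => EuclideanSpace ℝ (Fin 3)

lemma Mxw_nonneg : 0 ≤ Mxw := fun ξ => by unfold Mxw; positivity

lemma continuous_Mxw : Continuous Mxw := by unfold Mxw; fun_prop

lemma Mxw_eq_const_mul_exp (ξ : 𝔼) :
    Mxw ξ = (2 * π) ^ (-(3 : ℝ) / 2) * rexp (-(1 / 2) * ‖ξ‖ ^ 2) := by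
  unfold Mxw; ring_nf

lemma integrable_Mxw : Integrable Mxw :=
  ((integrable_norm_pow_mul_exp_neg_mul_sq_norm (volume : Measure 𝔼) (b := 1 / 2) (by norm_num)
    0).const_mul ((2 * π) ^ (-(3 : ℝ) / 2))).congr
    (ae_of_all _ fun x => by simp only [Mxw_eq_const_mul_exp, pow_zero, one_mul])

lemma integrable_Mxw_smul : Integrable (fun x : 𝔼 => Mxw x • x) := by
  refine ((integrable_norm_pow_mul_exp_neg_mul_sq_norm volume (b := 1 / 2) (by norm_num)
    1).const_mul ((2 * π) ^ (-(3 : ℝ) / 2))).mono'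
    (continuous_Mxw.smul continuous_id).aestronglyMeasurable (ae_of_all _ fun x => le_of_eq ?_)
  rw [norm_smul, norm_of_nonneg (Mxw_nonneg x), Mxw_eq_const_mul_exp, pow_one]
  ring

lemma integral_Mxw_smul : ∫ x : 𝔼, Mxw x • x = 0 :=
  integral_smul_self_eq_zero_of_even fun x => by simp only [Mxw, norm_neg]

lemma integral_Mxw_pos : 0 < ∫ x : 𝔼, Mxw x :=
  integral_pos_of_integrable_nonneg_nonzero (x := 0) continuous_Mxw integrable_Mxw Mxw_nonneg
    (by unfold Mxw; positivity)

lemma integral_norm_mul_Mxw_pos : 0 < ∫ x : 𝔼, ‖x‖ * Mxw x := by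
  obtain ⟨u, hu⟩ := exists_ne (0 : 𝔼)
  exact integral_pos_of_integrable_nonneg_nonzero (x := u) (continuous_norm.mul continuous_Mxw)
    (integrable_norm_mul Mxw_nonneg integrable_Mxw_smul)
    (fun x => mul_nonneg (norm_nonneg x) (Mxw_nonneg x))
    (mul_ne_zero (norm_ne_zero_iff.mpr hu) (by unfold Mxw; positivity))

end Maxwellian

theorem stmt7 :
    ∃ c₁ c₂ : ℝ, 0 < c₁ ∧ c₁ ≤ c₂ ∧
      ∀ ξ : EuclideanSpace ℝ (Fin 3),
        c₁ * (1 + ‖ξ‖ ^ 2) ^ ((1 : ℝ) / 2) ≤ nu ξ ∧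
        nu ξ ≤ c₂ * (1 + ‖ξ‖ ^ 2) ^ ((1 : ℝ) / 2) := by
  obtain ⟨K, hK, hsphere⟩ :=
    exists_integral_sphere_abs_inner_eq_mul_norm (E := EuclideanSpace ℝ (Fin 3))
  have hnu : ∀ ξ, nu ξ = K * ∫ x, ‖ξ - x‖ * Mxw x := fun ξ => by
    simp only [nu, integral_mul_const, hsphere, mul_assoc, integral_const_mul]
  set A := ∫ x, Mxw x
  set B := ∫ x, ‖x‖ * Mxw x
  have hA : 0 < A := integral_Mxw_pos
  have hB : 0 < B := integral_norm_mul_Mxw_pos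
  refine ⟨K * (min A B / 4), K * (A + B), by positivity,
    mul_le_mul_of_nonneg_left (by linarith [min_le_left A B]) hK.le, fun ξ => ?_⟩
  rw [← sqrt_eq_rpow, hnu, mul_assoc, mul_assoc]
  exact ⟨mul_le_mul_of_nonneg_left (mul_sqrt_one_add_sq_le hA.le hB.le (norm_nonneg ξ)
      (mul_norm_le_integral_norm_sub_mul Mxw_nonneg integrable_Mxw integrable_Mxw_smul
        integral_Mxw_smul ξ)
      (integral_norm_mul_sub_le Mxw_nonneg integrable_Mxw integrable_Mxw_smul ξ)) hK.le,
    mul_le_mul_of_nonneg_left (le_mul_sqrt_one_add_sq hA.le hB.le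
      (integral_norm_sub_mul_le Mxw_nonneg integrable_Mxw integrable_Mxw_smul ξ)) hK.le⟩
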